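/- In an error-free perfect secrecy system, the entropy of the key satisfies H(R) ≥ log|𝒰|, with equality if and only if R is uniform with P_R(r)=1/|𝒰| on its support. -/

import Mathlib

/-!
Perfect secrecy (`I(U;X) = 0`) gives `p(u,r,x) ≤ P(U=u) P(X=x)`, and `I(U;R) = 0` gives
`∑ₓ p(u,r,x) = P(U=u) P(R=r)`; hence for every message `u` of positive mass
`P(R=r) ≤ P(X ∈ Tᵤ)`, where `Tᵤ = {x | p(u,r,x) ≠ 0}`. Since `U` is a function of `(R,X)`,
the sets `Tᵤ` are disjoint for fixed `r`, so `|𝒰| P(R=r) ≤ 1`. Every key thus has mass at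
most `1/|𝒰|`, and a distribution bounded by `1/N` has entropy at least `log N`, with equality
exactly when it is uniform with mass `1/N` on its support.
-/

open Finset

/-- Shannon entropy of a finitely supported probability mass function. -/
noncomputable def ent {α : Type*} [Fintype α] (q : α → ℝ) : ℝ :=
  ∑ a, Real.negMulLog (q a)

open Real

lemma negMulLog_sub_mul_log {N : ℝ} (hN : N ≠ 0) (t : ℝ) :
    negMulLog t - t * log N = -(t * log (N * t)) := by
  rcases eq_or_ne t 0 with rfl | ht
  · simp
  · rw [log_mul hN ht, negMulLog]
    ring

lemma mul_log_le_negMulLog {N t : ℝ} (hN : 0 < N) (ht : 0 ≤ t) (hNt : N * t ≤ 1) :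
    t * log N ≤ negMulLog t := by
  have := negMulLog_sub_mul_log hN.ne' t
  have := mul_nonpos_of_nonneg_of_nonpos ht (log_nonpos (by positivity) hNt)
  linarith

lemma negMulLog_eq_mul_log_iff {N t : ℝ} (hN : 0 < N) (ht : 0 ≤ t) :
    negMulLog t = t * log N ↔ t = 0 ∨ N * t = 1 := by
  rw [← sub_eq_zero, negMulLog_sub_mul_log hN.ne', neg_eq_zero, mul_eq_zero, log_eq_zero]
  have : N * t ≠ -1 := by nlinarith
  simp only [this, or_false, mul_eq_zero, hN.ne', false_or, or_self_left]

section Entropy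

variable {α : Type*} [Fintype α] {q : α → ℝ} {N : ℝ}

lemma log_le_ent (hN : 0 < N) (hq : ∀ a, 0 ≤ q a) (hsum : ∑ a, q a = 1)
    (hle : ∀ a, N * q a ≤ 1) : log N ≤ ent q :=
  calc log N = ∑ a, q a * log N := by rw [← sum_mul, hsum, one_mul]
    _ ≤ ent q := sum_le_sum fun a _ => mul_log_le_negMulLog hN (hq a) (hle a)

lemma ent_eq_log_iff (hN : 0 < N) (hq : ∀ a, 0 ≤ q a) (hsum : ∑ a, q a = 1)
    (hle : ∀ a, N * q a ≤ 1) : ent q = log N ↔ ∀ a, q a ≠ 0 → q a = 1 / N := by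
  have hgap : ent q - log N = ∑ a, (negMulLog (q a) - q a * log N) := by
    rw [sum_sub_distrib, ← sum_mul, hsum, one_mul, ent]
  rw [← sub_eq_zero, hgap, sum_eq_zero_iff_of_nonneg fun a _ =>
    sub_nonneg.2 (mul_log_le_negMulLog hN (hq a) (hle a))]
  refine forall_congr' fun a => ?_
  rw [imp_iff_right (mem_univ a), sub_eq_zero, negMulLog_eq_mul_log_iff hN (hq a), eq_div_iff hN.ne',
    mul_comm, or_iff_not_imp_left]

end Entropy

lemma card_mul_le_sum_of_pairwiseDisjoint {ι β : Type*} [Fintype β] [DecidableEq β] {f : β → ℝ}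
    (hf : ∀ b, 0 ≤ f b) {S : Finset ι} {T : ι → Finset β}
    (hT : (S : Set ι).PairwiseDisjoint T) {c : ℝ} (hc : ∀ i ∈ S, c ≤ ∑ b ∈ T i, f b) :
    S.card * c ≤ ∑ b, f b :=
  calc S.card * c = ∑ _i ∈ S, c := by rw [sum_const, nsmul_eq_mul]
    _ ≤ ∑ i ∈ S, ∑ b ∈ T i, f b := sum_le_sum hc
    _ = ∑ b ∈ S.biUnion T, f b := (sum_biUnion hT).symm
    _ ≤ ∑ b, f b := sum_le_sum_of_subset_of_nonneg (subset_univ _) fun b _ _ => hf b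

section SecrecySystem

open scoped Classical

variable {𝒰 ℛ 𝒳 : Type*} [Fintype 𝒰] [Fintype ℛ] [Fintype 𝒳] {p : 𝒰 → ℛ → 𝒳 → ℝ}

lemma sum_key_le_sum_compatible_ciphertexts (hnn : ∀ u r x, 0 ≤ p u r x) {u : 𝒰} {r : ℛ}
    (hIUX : ∀ x, (∑ r, p u r x) = (∑ r, ∑ x', p u r x') * (∑ u', ∑ r, p u' r x))
    (hIUR : (∑ x, p u r x) = (∑ r', ∑ x, p u r' x) * (∑ u', ∑ x, p u' r x))
    (hu : 0 < ∑ r, ∑ x, p u r x) :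
    ∑ u', ∑ x, p u' r x ≤ ∑ x ∈ univ.filter (fun x => p u r x ≠ 0), ∑ u', ∑ r, p u' r x := by
  refine le_of_mul_le_mul_left ?_ hu
  calc (∑ r, ∑ x, p u r x) * ∑ u', ∑ x, p u' r x
      = ∑ x ∈ univ.filter (fun x => p u r x ≠ 0), p u r x := by rw [sum_filter_ne_zero, hIUR]
    _ ≤ ∑ x ∈ univ.filter (fun x => p u r x ≠ 0), ∑ r, p u r x :=
        sum_le_sum fun x _ => single_le_sum (fun r' _ => hnn u r' x) (mem_univ r)
    _ = (∑ r, ∑ x, p u r x) * ∑ x ∈ univ.filter (fun x => p u r x ≠ 0), ∑ u', ∑ r, p u' r x := by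
        rw [mul_sum]
        exact sum_congr rfl fun x _ => hIUX x

lemma card_support_mul_sum_key_le_one (hnn : ∀ u r x, 0 ≤ p u r x)
    (hsum : ∑ u, ∑ r, ∑ x, p u r x = 1)
    (hIUX : ∀ u x, (∑ r, p u r x) = (∑ r, ∑ x', p u r x') * (∑ u', ∑ r, p u' r x))
    (hIUR : ∀ u r, (∑ x, p u r x) = (∑ r', ∑ x, p u r' x) * (∑ u', ∑ x, p u' r x))
    {g : ℛ → 𝒳 → 𝒰} (hg : ∀ u r x, p u r x ≠ 0 → u = g r x) (r : ℛ) :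
    ((univ.filter fun u => (∑ r, ∑ x, p u r x) ≠ 0).card : ℝ) * (∑ u, ∑ x, p u r x) ≤ 1 := by
  have hdisj : ((univ.filter fun u => (∑ r, ∑ x, p u r x) ≠ 0 : Finset 𝒰) : Set 𝒰).PairwiseDisjoint
      fun u => univ.filter fun x => p u r x ≠ 0 := by
    intro u _ u' _ hne
    refine disjoint_left.2 fun x hx hx' => hne ?_
    rw [hg u r x (mem_filter.1 hx).2, hg u' r x (mem_filter.1 hx').2]
  have hsumX : ∑ x, ∑ u, ∑ r, p u r x = 1 := by
    rw [sum_comm]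
    exact (sum_congr rfl fun u _ => sum_comm).trans hsum
  refine hsumX ▸ card_mul_le_sum_of_pairwiseDisjoint
    (fun x => sum_nonneg fun u _ => sum_nonneg fun r _ => hnn u r x) hdisj fun u hu => ?_
  exact sum_key_le_sum_compatible_ciphertexts hnn (hIUX u) (hIUR u r)
    ((sum_nonneg fun r _ => sum_nonneg fun x _ => hnn u r x).lt_of_ne' (mem_filter.1 hu).2)

end SecrecySystem

open scoped Classical in
/-- In an error-free perfect secrecy system, `H(R) ≥ log |𝒰|`, with equality
iff `R` is uniform with mass `1/|𝒰|` on its support. -/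
theorem stmt_3 {𝒰 ℛ 𝒳 : Type*} [Fintype 𝒰] [Fintype ℛ] [Fintype 𝒳]
    (p : 𝒰 → ℛ → 𝒳 → ℝ)
    (hnn : ∀ u r x, 0 ≤ p u r x)
    (hsum : ∑ u, ∑ r, ∑ x, p u r x = 1)
    (hIUX : ∀ u x, (∑ r, p u r x)
      = (∑ r, ∑ x', p u r x') * (∑ u', ∑ r, p u' r x))
    (hIUR : ∀ u r, (∑ x, p u r x)
      = (∑ r', ∑ x, p u r' x) * (∑ u', ∑ x, p u' r x))
    (hdet : ∃ g : ℛ → 𝒳 → 𝒰, ∀ u r x, p u r x ≠ 0 → u = g r x) :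
    Real.log ((univ.filter fun u => (∑ r, ∑ x, p u r x) ≠ 0).card)
        ≤ ent (fun r => ∑ u, ∑ x, p u r x)
      ∧ (ent (fun r => ∑ u, ∑ x, p u r x)
          = Real.log ((univ.filter fun u => (∑ r, ∑ x, p u r x) ≠ 0).card)
        ↔ ∀ r, (∑ u, ∑ x, p u r x) ≠ 0 →
            (∑ u, ∑ x, p u r x)
              = 1 / ((univ.filter fun u => (∑ r, ∑ x, p u r x) ≠ 0).card : ℝ)) := by
  obtain ⟨g, hg⟩ := hdet
  have hcard : (0 : ℝ) < (univ.filter fun u => (∑ r, ∑ x, p u r x) ≠ 0).card := by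
    obtain ⟨u, -, hu⟩ := exists_ne_zero_of_sum_ne_zero (hsum.symm ▸ one_ne_zero)
    exact Nat.cast_pos.2 (card_pos.2 ⟨u, mem_filter.2 ⟨mem_univ u, hu⟩⟩)
  have hnnR : ∀ r, 0 ≤ ∑ u, ∑ x, p u r x := fun r =>
    sum_nonneg fun u _ => sum_nonneg fun x _ => hnn u r x
  have hsumR : ∑ r, ∑ u, ∑ x, p u r x = 1 := by rw [sum_comm]; exact hsum
  have hle := card_support_mul_sum_key_le_one hnn hsum hIUX hIUR hg
  exact ⟨log_le_ent hcard hnnR hsumR hle, ent_eq_log_iff hcard hnnR hsumR hle⟩
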